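/- arXiv:2307.06205 — 3 statements merged into one kernel-verified Lean document; each statement's English description precedes it below -/
import Mathlib

section
/- Let d_C be the cone distance on [0,∞) × X over a metric space (X,d_X), given by d_C((r₁,x₁),(r₂,x₂))² = r₁² + r₂² − 2 r₁ r₂ cos(min(d_X(x₁,x₂), π)). Fix t > 0, x ∈ X, and 0 < r < min(t,1). Then the minimal distance from the point q = (t,x) to the boundary of the set A(q,r) := {(s,y) : d_X(x,y) < r, t(1−r) < s < t(1+r)} equals t·sin(r). -/
/-! Write `q = (t, x)` and `θ = min (d_X(x, y), π)`. The law of cosines rearranges to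
`d_C((t, x), (s, y))² = (s - t cos θ)² + (t sin θ)²`. On the lateral part `θ = r`, so the distance
is at least `t sin r`, with equality at `s = t cos r`, which lies in `[t(1 - r), t(1 + r)]`.
On the two shells `cos θ ≤ 1` gives `d_C ≥ |s - t| = t r ≥ t sin r`. -/

open Real

lemma law_of_cosines_eq_sq_add_sq (a b θ : ℝ) :
    a ^ 2 + b ^ 2 - 2 * a * b * cos θ = (b - a * cos θ) ^ 2 + (a * sin θ) ^ 2 := by
  linear_combination a ^ 2 * (sin_sq_add_cos_sq θ).symm

lemma mul_sin_sq_le_law_of_cosines (a b θ : ℝ) :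
    (a * sin θ) ^ 2 ≤ a ^ 2 + b ^ 2 - 2 * a * b * cos θ := by
  rw [law_of_cosines_eq_sq_add_sq]
  exact le_add_of_nonneg_left (sq_nonneg _)

lemma sq_sub_le_law_of_cosines {a b : ℝ} (hab : 0 ≤ a * b) (θ : ℝ) :
    (a - b) ^ 2 ≤ a ^ 2 + b ^ 2 - 2 * a * b * cos θ := by
  nlinarith [cos_le_one θ]

def coneAnnulusBoundary {X : Type*} [MetricSpace X] (t r : ℝ) (x : X) : Set (ℝ × X) :=
  {p | (p.1 = t * (1 - r) ∨ p.1 = t * (1 + r)) ∧ dist x p.2 ≤ r} ∪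
    {p | dist x p.2 = r ∧ t * (1 - r) ≤ p.1 ∧ p.1 ≤ t * (1 + r)}

section ConeDistance

variable {X : Type*} [MetricSpace X] {dC : ℝ × X → ℝ × X → ℝ} {t r : ℝ} {x : X}

lemma mul_sin_le_of_mem_coneAnnulusBoundary
    (hnonneg : ∀ p q : ℝ × X, 0 ≤ dC p q)
    (hlaw : ∀ p q : ℝ × X,
      (dC p q) ^ 2 = p.1 ^ 2 + q.1 ^ 2 - 2 * p.1 * q.1 * cos (min (dist p.2 q.2) π))
    (ht : 0 ≤ t) (hr0 : 0 ≤ r) (hr1 : r ≤ 1) {p : ℝ × X}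
    (hp : p ∈ coneAnnulusBoundary t r x) :
    t * sin r ≤ dC (t, x) p := by
  obtain ⟨s, y⟩ := p
  refine le_of_sq_le_sq ?_ (hnonneg _ _)
  rw [hlaw]
  rcases hp with ⟨hs, -⟩ | ⟨hd, -, -⟩
  · have hs0 : 0 ≤ s := by rcases hs with rfl | rfl <;> nlinarith
    calc (t * sin r) ^ 2 ≤ (t - s) ^ 2 := by
          have hsin : t * sin r ≤ t * r := mul_le_mul_of_nonneg_left (sin_le hr0) ht
          have hsin0 : 0 ≤ t * sin r :=
            mul_nonneg ht (sin_nonneg_of_nonneg_of_le_pi hr0 (by linarith [pi_gt_three]))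
          rcases hs with rfl | rfl <;> nlinarith
      _ ≤ _ := sq_sub_le_law_of_cosines (mul_nonneg ht hs0) _
  · rw [hd, min_eq_left (by linarith [pi_gt_three])]
    exact mul_sin_sq_le_law_of_cosines t s r

lemma exists_mem_coneAnnulusBoundary_eq_mul_sin
    (hnonneg : ∀ p q : ℝ × X, 0 ≤ dC p q)
    (hlaw : ∀ p q : ℝ × X,
      (dC p q) ^ 2 = p.1 ^ 2 + q.1 ^ 2 - 2 * p.1 * q.1 * cos (min (dist p.2 q.2) π))
    (ht : 0 ≤ t) (hr0 : 0 ≤ r) (hr1 : r ≤ 1) (hy : ∃ y : X, dist x y = r) :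
    ∃ p ∈ coneAnnulusBoundary t r x, dC (t, x) p = t * sin r := by
  obtain ⟨y, hy⟩ := hy
  have hcos : 1 - r ≤ cos r := by nlinarith [one_sub_sq_div_two_le_cos (x := r)]
  refine ⟨(t * cos r, y), Or.inr ⟨hy, ?_, ?_⟩, ?_⟩
  · exact mul_le_mul_of_nonneg_left hcos ht
  · exact mul_le_mul_of_nonneg_left (by linarith [cos_le_one r]) ht
  · have hsin0 : 0 ≤ t * sin r :=
      mul_nonneg ht (sin_nonneg_of_nonneg_of_le_pi hr0 (by linarith [pi_gt_three]))
    refine (sq_eq_sq₀ (hnonneg _ _) hsin0).1 ?_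
    rw [hlaw, hy, min_eq_left (by linarith [pi_gt_three]), law_of_cosines_eq_sq_add_sq]
    ring

end ConeDistance

theorem stmt_2 {X : Type*} [MetricSpace X]
    (dC : ℝ × X → ℝ × X → ℝ)
    (hnonneg : ∀ p q : ℝ × X, 0 ≤ dC p q)
    (hlaw : ∀ p q : ℝ × X,
      (dC p q) ^ 2 = p.1 ^ 2 + q.1 ^ 2 - 2 * p.1 * q.1 * Real.cos (min (dist p.2 q.2) π))
    (t r : ℝ) (x : X) (ht : 0 < t) (hr0 : 0 < r) (hr : r < min t 1)
    (hy : ∃ y : X, dist x y = r) :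
    sInf ((fun p => dC (t, x) p) ''
        ({p : ℝ × X | (p.1 = t * (1 - r) ∨ p.1 = t * (1 + r)) ∧ dist x p.2 ≤ r} ∪
         {p : ℝ × X | dist x p.2 = r ∧ t * (1 - r) ≤ p.1 ∧ p.1 ≤ t * (1 + r)}))
      = t * Real.sin r := by
  have hr1 : r ≤ 1 := (hr.trans_le (min_le_right _ _)).le
  change sInf ((dC (t, x)) '' coneAnnulusBoundary t r x) = t * sin r
  obtain ⟨p, hp, hdist⟩ :=
    exists_mem_coneAnnulusBoundary_eq_mul_sin hnonneg hlaw ht.le hr0.le hr1 hy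
  refine IsLeast.csInf_eq ⟨⟨p, hp, hdist⟩, ?_⟩
  rintro _ ⟨q, hq, rfl⟩
  exact mul_sin_le_of_mem_coneAnnulusBoundary hnonneg hlaw ht.le hr0.le hr1 hq
end

section
/- Let (X,d) be a Polish space, let μ, μ_k be nonnegative finite Borel measures on X with μ_k ⇀ μ weakly in duality with bounded continuous functions, and let g_k ∈ L²(X;μ_k) satisfy sup_k ‖g_k‖_{L²(X;μ_k)} < ∞. Then there exist g ∈ L²(X;μ) and a subsequence k(l) such that the measures g_{k(l)} μ_{k(l)} converge weakly to g μ in duality with bounded continuous functions, and liminf_l ‖g_{k(l)}‖_{L²(X;μ_{k(l)})} ≥ ‖g‖_{L²(X;μ)}. -/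
open MeasureTheory Filter Topology BoundedContinuousFunction
open scoped ENNReal RealInnerProductSpace

section aux
variable {X : Type*} [MetricSpace X] [MeasurableSpace X] [BorelSpace X]

private lemma aux_inner (ν : Measure X) [IsFiniteMeasure ν] (f : X →ᵇ ℝ) (G : Lp ℝ 2 ν) :
    ⟪BoundedContinuousFunction.toLp (E := ℝ) 2 ν ℝ f, G⟫ = ∫ x, f x * G x ∂ν := by
  rw [MeasureTheory.L2.inner_def]
  apply integral_congr_ae
  filter_upwards [BoundedContinuousFunction.coeFn_toLp (E := ℝ) 2 ν ℝ f] with x h1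
  simp [h1, RCLike.inner_apply]
  ring

private lemma aux_norm (ν : Measure X) [IsFiniteMeasure ν] (f : X →ᵇ ℝ) :
    ‖BoundedContinuousFunction.toLp (E := ℝ) 2 ν ℝ f‖ = Real.sqrt (∫ x, f x * f x ∂ν) := by
  rw [norm_eq_sqrt_real_inner, MeasureTheory.L2.inner_def]
  congr 1
  apply integral_congr_ae
  filter_upwards [BoundedContinuousFunction.coeFn_toLp (E := ℝ) 2 ν ℝ f] with x h1
  simp [h1, RCLike.inner_apply]
  ring

end aux

theorem stmt_5 {X : Type*} [MetricSpace X] [TopologicalSpace.SeparableSpace X]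
    [CompleteSpace X] [MeasurableSpace X] [BorelSpace X]
    (μ : Measure X) (μk : ℕ → Measure X)
    [IsFiniteMeasure μ] [∀ k, IsFiniteMeasure (μk k)]
    (hconv : ∀ f : BoundedContinuousFunction X ℝ,
      Tendsto (fun k => ∫ x, f x ∂(μk k)) atTop (𝓝 (∫ x, f x ∂μ)))
    (g : ℕ → X → ℝ) (hg : ∀ k, MemLp (g k) 2 (μk k))
    (hbdd : ∃ C : ℝ≥0∞, C < ⊤ ∧ ∀ k, eLpNorm (g k) 2 (μk k) ≤ C) :
    ∃ (G : X → ℝ) (φ : ℕ → ℕ), MemLp G 2 μ ∧ StrictMono φ ∧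
      (∀ f : BoundedContinuousFunction X ℝ,
        Tendsto (fun l => ∫ x, f x * g (φ l) x ∂(μk (φ l))) atTop
          (𝓝 (∫ x, f x * G x ∂μ))) ∧
      eLpNorm G 2 μ ≤ liminf (fun l => eLpNorm (g (φ l)) 2 (μk (φ l))) atTop := by
  classical
  haveI : Fact ((2:ℝ≥0∞) ≠ ∞) := ⟨by norm_num⟩
  obtain ⟨C, hC, hgC⟩ := hbdd
  set H := Lp ℝ 2 μ with hHdef
  let J : (X →ᵇ ℝ) →L[ℝ] H := BoundedContinuousFunction.toLp 2 μ ℝ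
  let Jk : ∀ k : ℕ, (X →ᵇ ℝ) →L[ℝ] Lp ℝ 2 (μk k) :=
    fun k => BoundedContinuousFunction.toLp 2 (μk k) ℝ
  let Gk : ∀ k : ℕ, Lp ℝ 2 (μk k) := fun k => (hg k).toLp (g k)
  let T : ℕ → (X →ᵇ ℝ) → ℝ := fun k f => ⟪Jk k f, Gk k⟫
  have hT : ∀ k f, T k f = ∫ x, f x * g k x ∂(μk k) := by
    intro k f
    rw [show T k f = ⟪Jk k f, Gk k⟫ from rfl, aux_inner]
    apply integral_congr_ae
    filter_upwards [(hg k).coeFn_toLp] with x hx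
    rw [hx]
  -- norm convergence of test functions
  have hb : ∀ f : X →ᵇ ℝ, Tendsto (fun k => ∫ x, f x * f x ∂(μk k)) atTop
      (𝓝 (∫ x, f x * f x ∂μ)) := by
    intro f
    have := hconv (f * f)
    simpa [BoundedContinuousFunction.coe_mul] using this
  have hbn : ∀ f : X →ᵇ ℝ, Tendsto (fun k => ‖Jk k f‖) atTop (𝓝 ‖J f‖) := by
    intro f
    simp only [show ∀ k, ‖Jk k f‖ = Real.sqrt (∫ x, f x * f x ∂(μk k)) from
      fun k => aux_norm (μk k) f, show ‖J f‖ = Real.sqrt (∫ x, f x * f x ∂μ) from aux_norm μ f]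
    exact (Real.continuous_sqrt.tendsto _).comp (hb f)
  -- uniform bound on the L² norms
  let a : ℕ → ℝ := fun k => ‖Gk k‖
  have ha0 : ∀ k, 0 ≤ a k := fun k => norm_nonneg _
  have ha_eq : ∀ k, a k = (eLpNorm (g k) 2 (μk k)).toReal := fun k =>
    MeasureTheory.Lp.norm_toLp _ _
  have haC : ∀ k, a k ≤ C.toReal := by
    intro k
    rw [ha_eq k]
    exact ENNReal.toReal_mono hC.ne (hgC k)
  have hTb : ∀ k f, |T k f| ≤ a k * ‖Jk k f‖ := fun k f => by
    rw [mul_comm]; exact abs_real_inner_le_norm _ _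
  -- countable dense family in the range of J
  let p : Submodule ℝ H := J.range
  have hpdense : Dense (p : Set H) := by
    have hr : (J.range).toAddSubgroup = MeasureTheory.Lp.boundedContinuousFunction ℝ 2 μ :=
      BoundedContinuousFunction.range_toLp 2 μ
    have : (p : Set H) = (MeasureTheory.Lp.boundedContinuousFunction ℝ 2 μ : Set H) := by
      rw [← hr]; rfl
    rw [this]
    exact MeasureTheory.Lp.boundedContinuousFunction_dense ℝ μ (by norm_num)
  obtain ⟨s, hs_count, hs_dense⟩ := TopologicalSpace.exists_countable_dense (p : Set H)
  have hs_ne : s.Nonempty := by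
    haveI : Nonempty (p : Set H) := ⟨⟨0, p.zero_mem⟩⟩
    exact hs_dense.nonempty
  obtain ⟨e, he⟩ := Set.Countable.exists_eq_range hs_count hs_ne
  have hmem : ∀ n : ℕ, ∃ f : X →ᵇ ℝ, J f = (e n : H) := fun n => (e n).2
  let D : ℕ → (X →ᵇ ℝ) := fun n => (hmem n).choose
  have hDn : ∀ n, J (D n) = (e n : H) := fun n => (hmem n).choose_spec
  have hD : ∀ (f : X →ᵇ ℝ) (ε : ℝ), 0 < ε → ∃ n, ‖J f - J (D n)‖ < ε := by
    intro f ε hε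
    have hm : (⟨J f, ⟨f, rfl⟩⟩ : (p : Set H)) ∈ closure s := hs_dense _
    rcases Metric.mem_closure_iff.1 hm ε hε with ⟨b, hb_mem, hb_dist⟩
    rw [he] at hb_mem
    rcases hb_mem with ⟨n, rfl⟩
    refine ⟨n, ?_⟩
    rw [hDn n]
    rw [Subtype.dist_eq, dist_eq_norm] at hb_dist
    exact hb_dist
  -- extraction of a subsequence
  have hbddJk : ∀ n : ℕ, ∃ R : ℝ, ∀ k, T k (D n) ∈ Set.Icc (-R) R := by
    intro n
    obtain ⟨B, hB⟩ := (hbn (D n)).bddAbove_range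
    refine ⟨C.toReal * B, fun k => ?_⟩
    have h1 : |T k (D n)| ≤ C.toReal * B := by
      refine (hTb k (D n)).trans ?_
      have h2 : ‖Jk k (D n)‖ ≤ B := hB ⟨k, rfl⟩
      have h3 : (0:ℝ) ≤ ‖Jk k (D n)‖ := norm_nonneg _
      exact mul_le_mul (haC k) h2 h3 (ENNReal.toReal_nonneg)
    constructor
    · linarith [neg_abs_le (T k (D n))]
    · linarith [le_abs_self (T k (D n))]
  choose R hR using hbddJk
  let F : ℕ → ℝ × (ℕ → ℝ) := fun k => (a k, fun n => T k (D n))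
  have hK : IsCompact ((Set.Icc (0:ℝ) C.toReal) ×ˢ Set.univ.pi fun n => Set.Icc (-(R n)) (R n)) :=
    isCompact_Icc.prod (isCompact_univ_pi fun n => isCompact_Icc)
  have hFK : ∀ k, F k ∈ (Set.Icc (0:ℝ) C.toReal) ×ˢ Set.univ.pi fun n => Set.Icc (-(R n)) (R n) :=
    fun k => ⟨⟨ha0 k, haC k⟩, fun n _ => hR n k⟩
  obtain ⟨⟨A, L₀⟩, -, φ, hφ, hφtend⟩ := hK.tendsto_subseq hFK
  have hφatTop : Tendsto φ atTop atTop := hφ.tendsto_atTop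
  have hA : Tendsto (fun l => a (φ l)) atTop (𝓝 A) :=
    (continuous_fst.tendsto _).comp hφtend
  have hL₀ : ∀ n, Tendsto (fun l => T (φ l) (D n)) atTop (𝓝 (L₀ n)) := by
    intro n
    have h2 : Tendsto (fun l => (F (φ l)).2) atTop (𝓝 L₀) := (continuous_snd.tendsto _).comp hφtend
    exact (tendsto_pi_nhds.1 h2) n
  have hA0 : 0 ≤ A := le_of_tendsto_of_tendsto' tendsto_const_nhds hA fun l => ha0 (φ l)
  -- Cauchy property for each test function
  have hTsub : ∀ k (u v : X →ᵇ ℝ), T k u - T k v = T k (u - v) := by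
    intro k u v
    simp only [T, ← inner_sub_left, ← map_sub]
  have hcauchy : ∀ f : X →ᵇ ℝ, CauchySeq fun l => T (φ l) f := by
    intro f
    rw [Metric.cauchySeq_iff]
    intro ε hε
    have hCtR1 : (0:ℝ) < C.toReal + 1 := by positivity
    obtain ⟨n, hn⟩ := hD f (ε / 4 / (C.toReal + 1)) (by positivity)
    -- eventual bound for the perturbation
    have hpert : ∀ᶠ k in atTop, ‖Jk k (f - D n)‖ < ε / 4 / (C.toReal + 1) := by
      have hlim : Tendsto (fun k => ‖Jk k (f - D n)‖) atTop (𝓝 ‖J (f - D n)‖) := hbn (f - D n)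
      have : ‖J (f - D n)‖ < ε / 4 / (C.toReal + 1) := by
        rw [map_sub]; exact hn
      exact hlim.eventually_lt_const this
    have hpert2 : ∀ᶠ l in atTop, |T (φ l) f - T (φ l) (D n)| ≤ ε / 4 := by
      filter_upwards [hφatTop.eventually hpert] with l hl
      rw [hTsub]
      refine (hTb _ _).trans ?_
      have h1 : a (φ l) * ‖Jk (φ l) (f - D n)‖ ≤ (C.toReal) * (ε / 4 / (C.toReal + 1)) :=
        mul_le_mul (haC _) hl.le (norm_nonneg _) ENNReal.toReal_nonneg
      refine h1.trans ?_
      have hx : (0:ℝ) ≤ ε / 4 / (C.toReal + 1) := by positivity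
      calc C.toReal * (ε / 4 / (C.toReal + 1))
          ≤ (C.toReal + 1) * (ε / 4 / (C.toReal + 1)) :=
            mul_le_mul_of_nonneg_right (by linarith) hx
        _ = ε / 4 := by field_simp
    have hv : CauchySeq fun l => T (φ l) (D n) := (hL₀ n).cauchySeq
    rw [Metric.cauchySeq_iff] at hv
    obtain ⟨N₁, hN₁⟩ := hv (ε / 4) (by positivity)
    obtain ⟨N₂, hN₂⟩ := eventually_atTop.1 hpert2
    refine ⟨max N₁ N₂, fun m hm m' hm' => ?_⟩
    have h1 := hN₂ m (le_trans (le_max_right _ _) hm)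
    have h2 := hN₂ m' (le_trans (le_max_right _ _) hm')
    have h3 := hN₁ m (le_trans (le_max_left _ _) hm) m' (le_trans (le_max_left _ _) hm')
    rw [Real.dist_eq] at h3 ⊢
    have t1 : |T (φ m) f - T (φ m') (D n)| ≤
        |T (φ m) f - T (φ m) (D n)| + |T (φ m) (D n) - T (φ m') (D n)| :=
      abs_sub_le _ _ _
    have t2 : |T (φ m) f - T (φ m') f| ≤
        |T (φ m) f - T (φ m') (D n)| + |T (φ m') (D n) - T (φ m') f| :=
      abs_sub_le _ _ _
    have t3 : |T (φ m') (D n) - T (φ m') f| = |T (φ m') f - T (φ m') (D n)| := abs_sub_comm _ _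
    linarith
  -- the limit functional on bounded continuous functions
  let L : (X →ᵇ ℝ) → ℝ := fun f => limUnder atTop fun l => T (φ l) f
  have hLtend : ∀ f : X →ᵇ ℝ, Tendsto (fun l => T (φ l) f) atTop (𝓝 (L f)) := fun f =>
    (hcauchy f).tendsto_limUnder
  have hLadd : ∀ u v : X →ᵇ ℝ, L (u + v) = L u + L v := by
    intro u v
    refine tendsto_nhds_unique (hLtend (u + v)) ?_
    have heq : (fun l => T (φ l) (u + v)) = fun l => T (φ l) u + T (φ l) v := by
      funext l; simp only [T, map_add, inner_add_left]
    rw [heq]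
    exact (hLtend u).add (hLtend v)
  have hLsmul : ∀ (c : ℝ) (u : X →ᵇ ℝ), L (c • u) = c * L u := by
    intro c u
    refine tendsto_nhds_unique (hLtend (c • u)) ?_
    have heq : (fun l => T (φ l) (c • u)) = fun l => c * T (φ l) u := by
      funext l; simp only [T, _root_.map_smul, real_inner_smul_left]
    rw [heq]
    exact (hLtend u).const_mul c
  have hLb : ∀ f : X →ᵇ ℝ, |L f| ≤ A * ‖J f‖ := by
    intro f
    have h1 : Tendsto (fun l => |T (φ l) f|) atTop (𝓝 |L f|) := (hLtend f).abs
    have h2 : Tendsto (fun l => a (φ l) * ‖Jk (φ l) f‖) atTop (𝓝 (A * ‖J f‖)) :=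
      hA.mul ((hbn f).comp hφatTop)
    exact le_of_tendsto_of_tendsto' h1 h2 fun l => hTb (φ l) f
  have hLsub : ∀ u v : X →ᵇ ℝ, L (u - v) = L u - L v := by
    intro u v
    refine tendsto_nhds_unique (hLtend (u - v)) ?_
    have heq : (fun l => T (φ l) (u - v)) = fun l => T (φ l) u - T (φ l) v := by
      funext l; rw [← hTsub]
    rw [heq]
    exact (hLtend u).sub (hLtend v)
  have hLdiff : ∀ u v : X →ᵇ ℝ, J u = J v → L u = L v := by
    intro u v huv
    have h2 : |L (u - v)| ≤ A * ‖J (u - v)‖ := hLb _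
    rw [map_sub, huv, sub_self, norm_zero, mul_zero] at h2
    have h3 : L (u - v) = 0 := abs_nonpos_iff.1 h2
    rw [hLsub] at h3
    linarith
  -- extend to a continuous linear functional on H
  have hmemp : ∀ x : p, ∃ f : X →ᵇ ℝ, J f = (x : H) := fun x => x.2
  have hpre : ∀ x : p, J ((hmemp x).choose) = (x : H) := fun x => (hmemp x).choose_spec
  let pre : p → (X →ᵇ ℝ) := fun x => (hmemp x).choose
  let S₀ : p →ₗ[ℝ] ℝ :=
    { toFun := fun x => L (pre x)
      map_add' := by
        intro x y
        show L (pre (x + y)) = L (pre x) + L (pre y)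
        have h1 : J (pre (x + y)) = J (pre x + pre y) := by
          rw [map_add, hpre, hpre, hpre]
          norm_cast
        rw [hLdiff _ _ h1, hLadd]
      map_smul' := by
        intro c x
        show L (pre (c • x)) = c * L (pre x)
        have h1 : J (pre (c • x)) = J (c • pre x) := by
          rw [_root_.map_smul, hpre, hpre]
          norm_cast
        rw [hLdiff _ _ h1, hLsmul] }
  have hS₀b : ∀ x : p, ‖S₀ x‖ ≤ A * ‖x‖ := by
    intro x
    have h1 := hLb (pre x)
    rw [hpre x] at h1
    show ‖L (pre x)‖ ≤ A * ‖x‖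
    simpa [Real.norm_eq_abs] using h1
  let S₀c : p →L[ℝ] ℝ := S₀.mkContinuous A hS₀b
  have hS₀c : ∀ x : p, S₀c x = L (pre x) := fun x => rfl
  have hui : IsUniformInducing ((p.subtypeL : p →L[ℝ] H) : p → H) :=
    isUniformEmbedding_subtype_val.isUniformInducing
  have hdr : DenseRange ((p.subtypeL : p →L[ℝ] H) : p → H) := hpdense.denseRange_val
  let S : H →L[ℝ] ℝ := S₀c.extend p.subtypeL
  have hSx : ∀ x : p, S (x : H) = S₀c x := fun x =>
    ContinuousLinearMap.extend_eq S₀c hdr hui x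
  have hSJ : ∀ f : X →ᵇ ℝ, S (J f) = L f := by
    intro f
    have h1 := hSx ⟨J f, ⟨f, rfl⟩⟩
    rw [hS₀c] at h1
    rw [h1]
    exact hLdiff _ _ (hpre ⟨J f, ⟨f, rfl⟩⟩)
  have hSb : ∀ h : H, ‖S h‖ ≤ A * ‖h‖ := by
    have hcl : IsClosed {h : H | ‖S h‖ ≤ A * ‖h‖} :=
      isClosed_le S.continuous.norm (continuous_const.mul continuous_norm)
    have hsub : (p : Set H) ⊆ {h : H | ‖S h‖ ≤ A * ‖h‖} := by
      rintro y hy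
      show ‖S y‖ ≤ A * ‖y‖
      have h2 : S y = S₀c ⟨y, hy⟩ := hSx ⟨y, hy⟩
      rw [h2]
      exact hS₀b ⟨y, hy⟩
    intro h
    have hmemcl : h ∈ closure (p : Set H) := by rw [hpdense.closure_eq]; trivial
    exact hcl.closure_subset_iff.2 hsub hmemcl
  have hSnorm : ‖S‖ ≤ A := S.opNorm_le_bound hA0 hSb
  -- Riesz representation
  let GH : H := (InnerProductSpace.toDual ℝ H).symm S
  have hGH : ∀ h : H, ⟪GH, h⟫ = S h := fun h => InnerProductSpace.toDual_symm_apply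
  have hGHn : ‖GH‖ ≤ A := by
    rw [show GH = (InnerProductSpace.toDual ℝ H).symm S from rfl,
      LinearIsometryEquiv.norm_map]
    exact hSnorm
  refine ⟨⇑GH, φ, MeasureTheory.Lp.memLp GH, hφ, ?_, ?_⟩
  · intro f
    have heq : (fun l => ∫ x, f x * g (φ l) x ∂(μk (φ l))) = fun l => T (φ l) f := by
      funext l; rw [hT]
    have h2 : ∫ x, f x * GH x ∂μ = L f := by
      rw [← aux_inner μ f GH, real_inner_comm, hGH, hSJ]
    rw [heq, h2]
    exact hLtend f
  · have hsn : eLpNorm (⇑GH) 2 μ = ENNReal.ofReal ‖GH‖ := by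
      rw [MeasureTheory.Lp.norm_def, ENNReal.ofReal_toReal (MeasureTheory.Lp.eLpNorm_ne_top GH)]
    have heq : (fun l => eLpNorm (g (φ l)) 2 (μk (φ l))) = fun l => ENNReal.ofReal (a (φ l)) := by
      funext l
      rw [ha_eq, ENNReal.ofReal_toReal ((lt_of_le_of_lt (hgC _) hC).ne)]
    have hlim2 : Tendsto (fun l => eLpNorm (g (φ l)) 2 (μk (φ l))) atTop
        (𝓝 (ENNReal.ofReal A)) := by
      rw [heq]
      exact (ENNReal.continuous_ofReal.tendsto A).comp hA
    rw [hlim2.liminf_eq, hsn]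
    exact ENNReal.ofReal_le_ofReal hGHn
end

section
/- Let (X,d,m) be a metric measure space, A ⊂ X open, F ⊂ X Borel, R > 0, and E := F × ℝ ⊂ X × ℝ with the product metric measure structure. Then R · Per(F; A) ≤ Per(E; A × [0,R]). Combined with the reverse inequality, R · Per(F;A) = Per(E; A×[0,R]), so E has locally finite perimeter if and only if F does. -/
open MeasureTheory Filter Topology
open scoped ENNReal
open scoped NNReal
set_option linter.unusedSectionVars false
set_option maxHeartbeats 1000000

/-- The local Lipschitz constant (slope) of a function at a point. -/
noncomputable def locLip {X : Type*} [MetricSpace X] (f : X → ℝ) (x : X) : ℝ :=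
  Filter.limsup (fun y => |f x - f y| / dist x y) (𝓝[≠] x)

/-- The variational (BV relaxation) perimeter of a Borel set `F` relative to a set `A`
in a metric measure space: the infimum, over sequences of locally Lipschitz functions
converging to `χ_F` in `L¹_loc(A)`, of the liminf of the integrals of the local
Lipschitz constants over `A`. -/
noncomputable def perimeter {X : Type*} [MetricSpace X] [MeasurableSpace X]
    (m : Measure X) (F A : Set X) : ℝ≥0∞ :=
  sInf { P : ℝ≥0∞ | ∃ φ : ℕ → X → ℝ,
    (∀ i, LocallyLipschitz (φ i)) ∧
    (∀ K : Set X, K ⊆ A → IsCompact K →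
      Tendsto (fun i => ∫⁻ x in K,
          ENNReal.ofReal |φ i x - Set.indicator F (fun _ => (1 : ℝ)) x| ∂m)
        atTop (𝓝 0)) ∧
    P = Filter.liminf (fun i => ∫⁻ x in A, ENNReal.ofReal (locLip (φ i) x) ∂m) atTop }

lemma locLip_def {X : Type*} [MetricSpace X] (f : X → ℝ) (x : X) :
    locLip f x = Filter.limsup (fun y => |f x - f y| / dist x y) (𝓝[≠] x) := rfl

noncomputable def sliceAvg {X : Type*} [MetricSpace X] (φ : X × ℝ → ℝ) (a b : ℝ) (z : X) : ℝ :=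
  (b - a)⁻¹ * ∫ t in Set.Icc a b, φ (z, t)

section A
variable {X : Type*} [MetricSpace X] {f : X → ℝ} {x : X}

lemma real_limsup_bot (g : X → ℝ) : Filter.limsup g (⊥ : Filter X) = 0 := by
  rw [Filter.limsup_eq]
  have h : {a : ℝ | ∀ᶠ n in (⊥ : Filter X), g n ≤ a} = Set.univ := by ext a; simp
  rw [h]
  refine Real.sInf_of_not_bddBelow ?_
  rintro ⟨b, hb⟩
  have := hb (Set.mem_univ (b - 1))
  linarith

/-- local Lipschitz bound on a ball -/
lemma LocallyLipschitz.exists_ball_lip (hf : LocallyLipschitz f) (x : X) :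
    ∃ K : ℝ≥0, ∃ r : ℝ, 0 < r ∧ ∀ y ∈ Metric.ball x r, ∀ z ∈ Metric.ball x r,
      dist (f y) (f z) ≤ K * dist y z := by
  obtain ⟨K, t, ht, hlip⟩ := hf x
  obtain ⟨r, hr, hball⟩ := Metric.mem_nhds_iff.1 ht
  exact ⟨K, r, hr, fun y hy z hz => hlip.dist_le_mul y (hball hy) z (hball hz)⟩

lemma quot_nonneg (y : X) : 0 ≤ |f x - f y| / dist x y :=
  div_nonneg (abs_nonneg _) dist_nonneg

lemma eventually_quot_le (hf : LocallyLipschitz f) (x : X) :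
    ∃ K : ℝ≥0, ∀ᶠ y in 𝓝[≠] x, |f x - f y| / dist x y ≤ K := by
  obtain ⟨K, r, hr, hlip⟩ := hf.exists_ball_lip x
  refine ⟨K, ?_⟩
  filter_upwards [inter_mem_nhdsWithin _ (Metric.ball_mem_nhds x hr)] with y hy
  have hyx : y ≠ x := hy.1
  have hd : 0 < dist x y := dist_pos.2 (Ne.symm hyx)
  rw [div_le_iff₀ hd, ← Real.dist_eq]
  exact hlip x (Metric.mem_ball_self hr) y hy.2

lemma isBounded_quot (hf : LocallyLipschitz f) (x : X) :
    IsBoundedUnder (· ≤ ·) (𝓝[≠] x) (fun y => |f x - f y| / dist x y) := by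
  obtain ⟨K, hK⟩ := eventually_quot_le hf x
  exact ⟨K, hK⟩

lemma isCobounded_quot (hf : LocallyLipschitz f) (x : X) [NeBot (𝓝[≠] x)] :
    IsCoboundedUnder (· ≥ ·) (𝓝[≠] x) (fun y => |f x - f y| / dist x y) := by
  obtain ⟨K, hK⟩ := eventually_quot_le hf x
  exact isCoboundedUnder_ge_of_eventually_le _ hK

lemma isCobounded_quot_le (x : X) [NeBot (𝓝[≠] x)] :
    IsCoboundedUnder (· ≤ ·) (𝓝[≠] x) (fun y => |f x - f y| / dist x y) :=
  IsBoundedUnder.isCoboundedUnder_le ⟨0, eventually_map.2 (Eventually.of_forall fun y => quot_nonneg y)⟩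

lemma locLip_nonneg (hf : LocallyLipschitz f) (x : X) : 0 ≤ locLip f x := by
  rcases eq_or_neBot (𝓝[≠] x) with hbot | hne
  · rw [locLip, hbot, real_limsup_bot]
  · exact le_limsup_of_frequently_le (Eventually.frequently
      (Eventually.of_forall fun y => quot_nonneg y)) (isBounded_quot hf x)

end A


section B
variable {X : Type*} [MetricSpace X] {f : X → ℝ} {x : X}



variable [MeasurableSpace X] [BorelSpace X]

lemma measurable_ofReal_locLip (hf : LocallyLipschitz f) :
    Measurable fun x => ENNReal.ofReal (locLip f x) := by
  classical
  set S : ℕ → X → ℝ≥0∞ := fun n x =>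
    ⨆ (y : X) (_ : dist x y < 1 / (n + 1) ∧ 0 < dist x y),
      ENNReal.ofReal (|f x - f y| / dist x y) with hS
  have hlsc : ∀ n, LowerSemicontinuous (S n) := by
    intro n x a ha
    rw [hS] at ha
    simp only [lt_iSup_iff] at ha
    obtain ⟨y, ⟨h1, h2⟩, ha⟩ := ha
    have hcont : ContinuousAt (fun x' => ENNReal.ofReal (|f x' - f y| / dist x' y)) x := by
      refine ENNReal.continuous_ofReal.continuousAt.comp ?_
      refine ContinuousAt.div ?_ (Continuous.continuousAt (by fun_prop)) (ne_of_gt h2)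
      exact (continuous_abs.comp ((hf.continuous).sub continuous_const)).continuousAt
    have hev1 : ∀ᶠ x' in 𝓝 x, a < ENNReal.ofReal (|f x' - f y| / dist x' y) :=
      hcont.eventually_const_lt ha
    have hev2 : ∀ᶠ x' in 𝓝 x, dist x' y < 1 / (n + 1) := by
      have : Continuous fun x' => dist x' y := by fun_prop
      exact this.continuousAt.eventually_lt_const h1
    have hev3 : ∀ᶠ x' in 𝓝 x, 0 < dist x' y := by
      have : Continuous fun x' => dist x' y := by fun_prop
      exact this.continuousAt.eventually_const_lt h2
    filter_upwards [hev1, hev2, hev3] with x' e1 e2 e3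
    rw [hS]
    exact lt_of_lt_of_le e1 (le_iSup₂_of_le y ⟨e2, e3⟩ le_rfl)
  have hkey : ∀ x, ENNReal.ofReal (locLip f x) = ⨅ n, S n x := by
    intro x
    rcases eq_or_neBot (𝓝[≠] x) with hbot | hne
    · have h1 : locLip f x = 0 := by rw [locLip, hbot, real_limsup_bot]
      have h2 : (∅ : Set X) ∈ 𝓝[≠] x := by rw [hbot]; exact Filter.mem_bot
      obtain ⟨ε, hε, hball⟩ := (Metric.nhdsWithin_basis_ball).mem_iff.1 h2
      obtain ⟨n, hn⟩ := exists_nat_one_div_lt hε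
      have hSn : S n x = 0 := by
        rw [hS]
        refine le_antisymm (iSup_le fun y => iSup_le fun hy => ?_) zero_le
        exfalso
        refine hball (⟨?_, ?_⟩ : y ∈ Metric.ball x ε ∩ {x}ᶜ)
        · exact Metric.mem_ball'.2 (lt_trans hy.1 hn)
        · simp only [Set.mem_compl_iff, Set.mem_singleton_iff]
          intro h; rw [h] at hy; simp at hy
      refine le_antisymm ?_ ?_
      · rw [h1]; simp
      · exact le_trans (iInf_le _ n) (by rw [hSn]; exact zero_le)
    · have hbd := isBounded_quot hf x
      have hcb := isCobounded_quot_le (f := f) x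
      refine le_antisymm (le_iInf fun n => ?_) ?_
      · rcases eq_or_ne (S n x) ⊤ with htop | htop
        · rw [htop]; exact le_top
        · have hub : ∀ᶠ y in 𝓝[≠] x, |f x - f y| / dist x y ≤ (S n x).toReal := by
            filter_upwards [inter_mem_nhdsWithin _
              (Metric.ball_mem_nhds x (by positivity : (0:ℝ) < 1 / (n + 1)))] with y hy
            have hyx : (y : X) ≠ x := hy.1
            have hd : 0 < dist x y := dist_pos.2 (Ne.symm hyx)
            have hd2 : dist x y < 1 / (n + 1) := by
              rw [dist_comm]; exact Metric.mem_ball.1 hy.2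
            have : ENNReal.ofReal (|f x - f y| / dist x y) ≤ S n x := by
              rw [hS]; exact le_iSup₂_of_le y ⟨hd2, hd⟩ le_rfl
            rw [← ENNReal.ofReal_le_iff_le_toReal htop]
            exact this
          have := limsup_le_of_le hcb hub
          calc ENNReal.ofReal (locLip f x) ≤ ENNReal.ofReal (S n x).toReal :=
                ENNReal.ofReal_le_ofReal this
            _ = S n x := ENNReal.ofReal_toReal htop
      · by_contra hcon
        rw [not_le] at hcon
        obtain ⟨r', hr0, h1, h2⟩ := ENNReal.lt_iff_exists_real_btwn.1 hcon
        have hrpos : 0 < r' := by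
          rcases lt_or_eq_of_le hr0 with h | h
          · exact h
          · exfalso; rw [← h] at h1; simp at h1
        have hlt : locLip f x < r' := by
          rw [← ENNReal.ofReal_lt_ofReal_iff hrpos]; exact h1
        have hfreq : ∃ᶠ y in 𝓝[≠] x, r' ≤ |f x - f y| / dist x y := by
          rw [(Metric.nhdsWithin_basis_ball).frequently_iff]
          intro ε hε
          obtain ⟨n, hn⟩ := exists_nat_one_div_lt hε
          have h2n : ENNReal.ofReal r' < S n x := lt_of_lt_of_le h2 (iInf_le _ n)
          rw [hS] at h2n
          simp only [lt_iSup_iff] at h2n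
          obtain ⟨y, ⟨hy1, hy2⟩, hy3⟩ := h2n
          refine ⟨y, ⟨?_, ?_⟩, ?_⟩
          · exact Metric.mem_ball'.2 (lt_trans hy1 hn)
          · simp only [Set.mem_compl_iff, Set.mem_singleton_iff]
            intro h; rw [h] at hy2; simp at hy2
          · have := (ENNReal.ofReal_lt_ofReal_iff_of_nonneg hr0).1 hy3
            exact le_of_lt this
        have := le_limsup_of_frequently_le hfreq hbd
        rw [locLip] at hlt
        linarith
  have : (fun x => ENNReal.ofReal (locLip f x)) = fun x => ⨅ n, S n x := funext hkey
  rw [this]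
  exact Measurable.iInf fun n => (hlsc n).measurable

end B


section C
variable {X : Type*} [MetricSpace X] {φ : X × ℝ → ℝ} {a b : ℝ}

/-- points of `X × ℝ` are never isolated -/
instance prod_punctured_neBot (p : X × ℝ) : NeBot (𝓝[≠] p) := by
  refine neBot_of_le (f := Filter.map (fun s => (p.1, s)) (𝓝[≠] p.2)) ?_
  rw [Filter.le_def]
  intro U hU
  rw [Filter.mem_map]
  have ht : Tendsto (fun s => (p.1, s)) (𝓝[≠] p.2) (𝓝[≠] p) := by
    rw [tendsto_nhdsWithin_iff]
    constructor
    · have h1 : Tendsto (fun s => (p.1, s)) (𝓝 p.2) (𝓝 (p.1, p.2)) :=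
        tendsto_const_nhds.prodMk_nhds tendsto_id
      rw [Prod.mk.eta] at h1
      exact h1.mono_left nhdsWithin_le_nhds
    · filter_upwards [self_mem_nhdsWithin] with s hs
      simp only [Set.mem_compl_iff, Set.mem_singleton_iff] at hs ⊢
      intro h
      exact hs (congrArg Prod.snd h)
  exact ht hU

/-- uniform Lipschitz bound on a tube -/
lemma exists_unif_lip (hφ : LocallyLipschitz φ) (hab : a < b) (x : X) :
    ∃ (L : ℝ≥0) (r : ℝ), 0 < r ∧ ∀ t ∈ Set.Icc a b, ∀ y ∈ Metric.ball x r,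
      ∀ z ∈ Metric.ball x r, |φ (y, t) - φ (z, t)| ≤ L * dist y z := by
  classical
  choose K r hr hlip using fun t : ℝ => hφ.exists_ball_lip (x, t)
  have hcover : Set.Icc a b ⊆ ⋃ t : ℝ, Metric.ball t (r t / 2) := by
    intro t _
    exact Set.mem_iUnion.2 ⟨t, Metric.mem_ball_self (half_pos (hr t))⟩
  obtain ⟨T, hT⟩ := isCompact_Icc.elim_finite_subcover _
    (fun t => Metric.isOpen_ball) hcover
  have hTne : T.Nonempty := by
    have ha : a ∈ Set.Icc a b := ⟨le_refl a, le_of_lt hab⟩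
    obtain ⟨t, ht, _⟩ := Set.mem_iUnion₂.1 (hT ha)
    exact ⟨t, ht⟩
  refine ⟨T.sup K, (T.inf' hTne r) / 2, ?_, ?_⟩
  · exact half_pos (by
      obtain ⟨t₀, ht₀, he⟩ := T.exists_mem_eq_inf' hTne r
      rw [he]; exact hr t₀)
  · intro t ht y hy z hz
    obtain ⟨t₀, ht₀, htball⟩ := Set.mem_iUnion₂.1 (hT ht)
    have hrt : T.inf' hTne r / 2 ≤ r t₀ / 2 := by
      gcongr
      exact Finset.inf'_le _ ht₀
    have hmem : ∀ w ∈ Metric.ball x (T.inf' hTne r / 2), (w, t) ∈ Metric.ball (x, t₀) (r t₀) := by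
      intro w hw
      rw [Metric.mem_ball] at hw ⊢
      rw [Prod.dist_eq]
      refine max_lt (lt_of_lt_of_le hw (le_trans hrt (by linarith [hr t₀]))) ?_
      calc dist t t₀ < r t₀ / 2 := Metric.mem_ball.1 htball
        _ < r t₀ := by linarith [hr t₀]
    have h1 := hlip t₀ (y, t) (hmem y hy) (z, t) (hmem z hz)
    rw [Real.dist_eq] at h1
    refine le_trans h1 ?_
    have hdd : dist ((y, t) : X × ℝ) (z, t) = dist y z := by
      rw [Prod.dist_eq, dist_self]
      exact sup_eq_left.mpr dist_nonneg
    rw [hdd]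
    exact mul_le_mul_of_nonneg_right (by exact_mod_cast Finset.le_sup ht₀) dist_nonneg
end C


section D
variable {X : Type*} [MetricSpace X] {φ : X × ℝ → ℝ}

/-- pointwise slice bound for the reverse Fatou argument -/
lemma slice_limsup_le (hφ : LocallyLipschitz φ) (x : X) (t : ℝ) (u : ℕ → X)
    (hu : Tendsto u atTop (𝓝 x)) (hne : ∀ᶠ n in atTop, u n ≠ x) :
    Filter.limsup (fun n => ENNReal.ofReal (|φ (x, t) - φ (u n, t)| / dist x (u n))) atTop
      ≤ ENNReal.ofReal (locLip φ (x, t)) := by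
  have htend : Tendsto (fun n => ((u n, t) : X × ℝ)) atTop (𝓝[≠] (x, t)) := by
    rw [tendsto_nhdsWithin_iff]
    constructor
    · exact hu.prodMk_nhds tendsto_const_nhds
    · filter_upwards [hne] with n hn
      simp only [Set.mem_compl_iff, Set.mem_singleton_iff]
      intro h
      exact hn (congrArg Prod.fst h)
  have hrw : ∀ n, u n ≠ x →
      |φ (x, t) - φ (u n, t)| / dist x (u n)
        = |φ (x, t) - φ ((u n, t) : X × ℝ)| / dist ((x, t) : X × ℝ) (u n, t) := by
    intro n hn
    congr 1
    rw [Prod.dist_eq, dist_self]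
    exact (sup_eq_left.mpr dist_nonneg).symm
  refine ENNReal.le_of_forall_pos_le_add fun ε hε _ => ?_
  have hlt : locLip φ (x, t) < locLip φ (x, t) + ε := by
    have : (0:ℝ) < ε := hε
    linarith
  have hev : ∀ᶠ z in 𝓝[≠] ((x, t) : X × ℝ),
      |φ (x, t) - φ z| / dist (x, t) z < locLip φ (x, t) + ε :=
    eventually_lt_of_limsup_lt hlt (isBounded_quot hφ (x, t))
  have hevn : ∀ᶠ n in atTop, ENNReal.ofReal (|φ (x, t) - φ (u n, t)| / dist x (u n))
      ≤ ENNReal.ofReal (locLip φ (x, t)) + ε := by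
    filter_upwards [htend.eventually hev, hne] with n h1 h2
    rw [hrw n h2]
    calc ENNReal.ofReal (|φ (x, t) - φ ((u n, t) : X × ℝ)| / dist ((x, t) : X × ℝ) (u n, t))
        ≤ ENNReal.ofReal (locLip φ (x, t) + ε) := ENNReal.ofReal_le_ofReal (le_of_lt h1)
      _ = ENNReal.ofReal (locLip φ (x, t)) + ENNReal.ofReal ε :=
          ENNReal.ofReal_add (locLip_nonneg hφ (x, t)) (le_of_lt hε)
      _ = ENNReal.ofReal (locLip φ (x, t)) + ε := by rw [ENNReal.ofReal_coe_nnreal]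
  exact limsup_le_of_le (by isBoundedDefault) hevn
end D


section E
variable {X : Type*} [MetricSpace X] {φ : X × ℝ → ℝ} {a b : ℝ}

lemma cont_slice (hφ : LocallyLipschitz φ) (z : X) : Continuous fun t : ℝ => φ (z, t) :=
  hφ.continuous.comp (Continuous.prodMk_right z)

lemma int_slice (hφ : LocallyLipschitz φ) (z : X) :
    IntegrableOn (fun t : ℝ => φ (z, t)) (Set.Icc a b) :=
  (cont_slice hφ z).integrableOn_Icc

/-- difference bound for slice averages -/
lemma sliceAvg_abs_sub (hφ : LocallyLipschitz φ) (hab : a < b) (y z : X) :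
    |sliceAvg φ a b y - sliceAvg φ a b z|
      ≤ (b - a)⁻¹ * ∫ t in Set.Icc a b, |φ (y, t) - φ (z, t)| := by
  have hsub : sliceAvg φ a b y - sliceAvg φ a b z
      = (b - a)⁻¹ * ∫ t in Set.Icc a b, (φ (y, t) - φ (z, t)) := by
    rw [sliceAvg, sliceAvg, ← mul_sub, integral_sub (int_slice hφ y) (int_slice hφ z)]
  rw [hsub, abs_mul, abs_inv, abs_of_pos (by linarith : (0:ℝ) < b - a)]
  refine mul_le_mul_of_nonneg_left ?_ (inv_nonneg.2 (by linarith : (0:ℝ) ≤ b - a))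
  calc |∫ t in Set.Icc a b, (φ (y, t) - φ (z, t))|
      = ‖∫ t in Set.Icc a b, (φ (y, t) - φ (z, t))‖ := (Real.norm_eq_abs _).symm
    _ ≤ ∫ t in Set.Icc a b, ‖φ (y, t) - φ (z, t)‖ := norm_integral_le_integral_norm _
    _ = ∫ t in Set.Icc a b, |φ (y, t) - φ (z, t)| := by
        simp only [Real.norm_eq_abs]

/-- The core pointwise inequality for the hard direction. -/
lemma core_pointwise (hφ : LocallyLipschitz φ) (hab : a < b) (x : X) :
    ENNReal.ofReal (b - a) * ENNReal.ofReal (locLip (sliceAvg φ a b) x)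
      ≤ ∫⁻ t in Set.Icc a b, ENNReal.ofReal (locLip φ (x, t)) := by
  classical
  set ψ := sliceAvg φ a b with hψdef
  set J := ∫⁻ t in Set.Icc a b, ENNReal.ofReal (locLip φ (x, t)) with hJ
  set c₀ := ENNReal.ofReal (b - a) with hc₀
  have hba : (0:ℝ) < b - a := by linarith
  have hc₀0 : c₀ ≠ 0 := by
    rw [hc₀]; exact (ENNReal.ofReal_pos.2 hba).ne'
  have hc₀top : c₀ ≠ ⊤ := ENNReal.ofReal_ne_top
  by_contra hcon
  rw [not_le] at hcon
  have hdiv : J / c₀ < ENNReal.ofReal (locLip ψ x) := by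
    rw [ENNReal.div_lt_iff (Or.inl hc₀0) (Or.inl hc₀top), mul_comm]
    exact hcon
  obtain ⟨r', hr'0, h1, h2⟩ := ENNReal.lt_iff_exists_real_btwn.1 hdiv
  have hr' : r' < locLip ψ x := (ENNReal.ofReal_lt_ofReal_iff_of_nonneg hr'0).1 h2
  have hJlt : J < c₀ * ENNReal.ofReal r' := by
    rw [mul_comm]
    exact (ENNReal.div_lt_iff (Or.inl hc₀0) (Or.inl hc₀top)).1 h1
  -- the punctured neighborhood filter is nontrivial
  haveI hne : NeBot (𝓝[≠] x) := by
    rcases eq_or_neBot (𝓝[≠] x) with hbot | hne2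
    · exfalso
      rw [locLip_def, hbot, real_limsup_bot] at hr'
      linarith
    · exact hne2
  obtain ⟨L, r₀, hr₀, hL⟩ := exists_unif_lip hφ hab x
  -- extract a sequence
  have hfreq : ∃ᶠ y in 𝓝[≠] x, r' < |ψ x - ψ y| / dist x y := by
    refine frequently_lt_of_lt_limsup (isCobounded_quot_le x) ?_
    rw [← locLip_def]
    exact hr'
  set l' := 𝓝[≠] x ⊓ Filter.principal {y | r' < |ψ x - ψ y| / dist x y} with hl'
  haveI hl'ne : NeBot l' := frequently_iff_neBot.1 hfreq
  obtain ⟨u, hu⟩ := exists_seq_tendsto l'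
  have hu1 : Tendsto u atTop (𝓝[≠] x) := hu.mono_right inf_le_left
  have hu2 : ∀ᶠ n in atTop, r' < |ψ x - ψ (u n)| / dist x (u n) := by
    have := tendsto_principal.1 (hu.mono_right inf_le_right)
    filter_upwards [this] with n hn using hn
  have hu3 : ∀ᶠ n in atTop, u n ∈ ({x}ᶜ : Set X) ∩ Metric.ball x r₀ :=
    hu1.eventually (inter_mem_nhdsWithin _ (Metric.ball_mem_nhds x hr₀))
  have hu0 : Tendsto u atTop (𝓝 x) := hu1.mono_right nhdsWithin_le_nhds
  have hneq : ∀ᶠ n in atTop, u n ≠ x := by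
    filter_upwards [hu3] with n hn using hn.1
  -- the Fatou family
  set f : ℕ → ℝ → ℝ≥0∞ := fun n t =>
    min (ENNReal.ofReal (|φ (x, t) - φ (u n, t)| / dist x (u n))) (L : ℝ≥0∞) with hf
  have hcontq : ∀ n, Continuous fun t => |φ (x, t) - φ (u n, t)| / dist x (u n) := by
    intro n
    exact (((cont_slice hφ x).sub (cont_slice hφ (u n))).abs).div_const _
  have hfmeas : ∀ n, Measurable (f n) := by
    intro n
    exact ((ENNReal.continuous_ofReal.comp (hcontq n)).min continuous_const).measurable
  have hbound : ∀ n, f n ≤ᵐ[volume.restrict (Set.Icc a b)] fun _ => (L : ℝ≥0∞) :=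
    fun n => Filter.Eventually.of_forall fun t => min_le_right _ _
  have hgfin : ∫⁻ _ in Set.Icc a b, (L : ℝ≥0∞) ≠ ⊤ := by
    rw [setLIntegral_const]
    exact ENNReal.mul_ne_top ENNReal.coe_ne_top (by rw [Real.volume_Icc]; exact ENNReal.ofReal_ne_top)
  have hFatou := limsup_lintegral_le (μ := volume.restrict (Set.Icc a b))
    (fun _ => (L : ℝ≥0∞)) hfmeas hbound hgfin
  have hpoint : ∀ t : ℝ, Filter.limsup (fun n => f n t) atTop
      ≤ ENNReal.ofReal (locLip φ (x, t)) := by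
    intro t
    refine le_trans (limsup_le_limsup (Filter.Eventually.of_forall
      fun n => min_le_left _ _)) ?_
    exact slice_limsup_le hφ x t u hu0 hneq
  have hupper : Filter.limsup (fun n => ∫⁻ t in Set.Icc a b, f n t) atTop ≤ J := by
    refine le_trans hFatou ?_
    rw [hJ]
    exact lintegral_mono fun t => hpoint t
  -- the lower bound
  have hev : ∀ᶠ n in atTop, c₀ * ENNReal.ofReal r' ≤ ∫⁻ t in Set.Icc a b, f n t := by
    filter_upwards [hu2, hu3] with n h2 h3
    have hd : 0 < dist x (u n) := dist_pos.2 (Ne.symm h3.1)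
    set q : ℝ → ℝ := fun t => |φ (x, t) - φ (u n, t)| / dist x (u n) with hq
    have hqle : ∀ t ∈ Set.Icc a b, q t ≤ (L : ℝ) := by
      intro t ht
      rw [hq]
      rw [div_le_iff₀ hd]
      exact hL t ht x (Metric.mem_ball_self hr₀) (u n) h3.2
    have hfeq : ∫⁻ t in Set.Icc a b, f n t = ∫⁻ t in Set.Icc a b, ENNReal.ofReal (q t) := by
      refine setLIntegral_congr_fun measurableSet_Icc ?_
      intro t ht
      rw [hf]
      refine min_eq_left ?_
      calc ENNReal.ofReal (q t) ≤ ENNReal.ofReal (L : ℝ) :=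
            ENNReal.ofReal_le_ofReal (hqle t ht)
        _ = (L : ℝ≥0∞) := ENNReal.ofReal_coe_nnreal
    have hqint : IntegrableOn q (Set.Icc a b) := (hcontq n).integrableOn_Icc
    have hql : ∫⁻ t in Set.Icc a b, ENNReal.ofReal (q t) = ENNReal.ofReal (∫ t in Set.Icc a b, q t) :=
      (ofReal_integral_eq_lintegral_ofReal hqint
        (Filter.Eventually.of_forall fun t => div_nonneg (abs_nonneg _) dist_nonneg)).symm
    have hchain : |ψ x - ψ (u n)| / dist x (u n) ≤ (b - a)⁻¹ * ∫ t in Set.Icc a b, q t := by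
      have habs := sliceAvg_abs_sub hφ hab x (u n)
      calc |ψ x - ψ (u n)| / dist x (u n)
          ≤ ((b - a)⁻¹ * ∫ t in Set.Icc a b, |φ (x, t) - φ (u n, t)|) / dist x (u n) := by
            gcongr
        _ = (b - a)⁻¹ * ∫ t in Set.Icc a b, q t := by
            rw [hq]
            rw [integral_div, mul_div_assoc]
    calc c₀ * ENNReal.ofReal r'
        ≤ c₀ * ENNReal.ofReal ((b - a)⁻¹ * ∫ t in Set.Icc a b, q t) :=
          mul_le_mul_right (ENNReal.ofReal_le_ofReal (le_trans (le_of_lt h2) hchain)) _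
      _ = c₀ * (ENNReal.ofReal (b - a)⁻¹ * ENNReal.ofReal (∫ t in Set.Icc a b, q t)) := by
          rw [ENNReal.ofReal_mul (inv_nonneg.2 hba.le)]
      _ = (c₀ * ENNReal.ofReal (b - a)⁻¹) * ENNReal.ofReal (∫ t in Set.Icc a b, q t) :=
          (mul_assoc _ _ _).symm
      _ = 1 * ENNReal.ofReal (∫ t in Set.Icc a b, q t) := by
          rw [hc₀, ← ENNReal.ofReal_mul hba.le, mul_inv_cancel₀ hba.ne', ENNReal.ofReal_one]
      _ = ∫⁻ t in Set.Icc a b, ENNReal.ofReal (q t) := by rw [one_mul, ← hql]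
      _ = ∫⁻ t in Set.Icc a b, f n t := hfeq.symm
  have hlow : c₀ * ENNReal.ofReal r'
      ≤ Filter.limsup (fun n => ∫⁻ t in Set.Icc a b, f n t) atTop :=
    le_limsup_of_frequently_le hev.frequently (by isBoundedDefault)
  exact lt_irrefl J (lt_of_lt_of_le hJlt (hlow.trans hupper))
end E


section F
variable {X : Type*} [MetricSpace X] {φ : X × ℝ → ℝ} {a b : ℝ}

lemma sliceAvg_locallyLipschitz (hφ : LocallyLipschitz φ) (hab : a < b) :
    LocallyLipschitz (sliceAvg φ a b) := by
  intro x
  obtain ⟨L, r₀, hr₀, hL⟩ := exists_unif_lip hφ hab x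
  have hba : (0:ℝ) < b - a := by linarith
  refine ⟨L, Metric.ball x r₀, Metric.ball_mem_nhds x hr₀, ?_⟩
  refine LipschitzOnWith.of_dist_le_mul ?_
  intro y hy z hz
  rw [Real.dist_eq]
  refine le_trans (sliceAvg_abs_sub hφ hab y z) ?_
  have hint : ∫ t in Set.Icc a b, |φ (y, t) - φ (z, t)|
      ≤ ∫ t in Set.Icc a b, (L : ℝ) * dist y z := by
    refine setIntegral_mono_on ?_ ?_ measurableSet_Icc ?_
    · exact (((cont_slice hφ y).sub (cont_slice hφ z)).abs).integrableOn_Icc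
    · exact integrableOn_const (by rw [Real.volume_Icc]; exact ENNReal.ofReal_ne_top)
    · intro t ht
      exact hL t ht y hy z hz
  refine le_trans (mul_le_mul_of_nonneg_left hint (inv_nonneg.2 hba.le)) ?_
  rw [setIntegral_const, Real.volume_real_Icc_of_le hab.le]
  rw [smul_eq_mul, ← mul_assoc, ← mul_assoc, inv_mul_cancel₀ hba.ne', one_mul]

/-- the convergence-transfer pointwise bound -/
lemma sliceAvg_indicator_bound (hφ : LocallyLipschitz φ) (hab : a < b) (F : Set X) (x : X) :
    ENNReal.ofReal (b - a) * ENNReal.ofReal |sliceAvg φ a b x - Set.indicator F (fun _ => (1:ℝ)) x|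
      ≤ ∫⁻ t in Set.Icc a b, ENNReal.ofReal |φ (x, t) - Set.indicator F (fun _ => (1:ℝ)) x| := by
  have hba : (0:ℝ) < b - a := by linarith
  set χ := Set.indicator F (fun _ => (1:ℝ)) x with hχ
  have hs : sliceAvg φ a b x - χ = (b - a)⁻¹ * ∫ t in Set.Icc a b, (φ (x, t) - χ) := by
    rw [integral_sub (int_slice hφ x) (integrableOn_const
      (by rw [Real.volume_Icc]; exact ENNReal.ofReal_ne_top))]
    rw [setIntegral_const, Real.volume_real_Icc_of_le hab.le, smul_eq_mul]
    rw [sliceAvg, mul_sub, ← mul_assoc, inv_mul_cancel₀ hba.ne', one_mul]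
  have habs : |sliceAvg φ a b x - χ| ≤ (b - a)⁻¹ * ∫ t in Set.Icc a b, |φ (x, t) - χ| := by
    rw [hs, abs_mul, abs_inv, abs_of_pos hba]
    refine mul_le_mul_of_nonneg_left ?_ (inv_nonneg.2 hba.le)
    calc |∫ t in Set.Icc a b, (φ (x, t) - χ)| = ‖∫ t in Set.Icc a b, (φ (x, t) - χ)‖ :=
          (Real.norm_eq_abs _).symm
      _ ≤ ∫ t in Set.Icc a b, ‖φ (x, t) - χ‖ := norm_integral_le_integral_norm _
      _ = ∫ t in Set.Icc a b, |φ (x, t) - χ| := by simp only [Real.norm_eq_abs]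
  have hint : IntegrableOn (fun t => |φ (x, t) - χ|) (Set.Icc a b) :=
    (((cont_slice hφ x).sub continuous_const).abs).integrableOn_Icc
  have hl : ∫⁻ t in Set.Icc a b, ENNReal.ofReal |φ (x, t) - χ|
      = ENNReal.ofReal (∫ t in Set.Icc a b, |φ (x, t) - χ|) :=
    (ofReal_integral_eq_lintegral_ofReal hint
      (Filter.Eventually.of_forall fun t => abs_nonneg _)).symm
  rw [hl]
  calc ENNReal.ofReal (b - a) * ENNReal.ofReal |sliceAvg φ a b x - χ|
      ≤ ENNReal.ofReal (b - a) * ENNReal.ofReal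
          ((b - a)⁻¹ * ∫ t in Set.Icc a b, |φ (x, t) - χ|) :=
        mul_le_mul_right (ENNReal.ofReal_le_ofReal habs) _
    _ = ENNReal.ofReal (b - a) * (ENNReal.ofReal (b - a)⁻¹
          * ENNReal.ofReal (∫ t in Set.Icc a b, |φ (x, t) - χ|)) := by
        rw [ENNReal.ofReal_mul (inv_nonneg.2 hba.le)]
    _ = ENNReal.ofReal (∫ t in Set.Icc a b, |φ (x, t) - χ|) := by
        rw [← mul_assoc, ← ENNReal.ofReal_mul hba.le, mul_inv_cancel₀ hba.ne',
          ENNReal.ofReal_one, one_mul]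

end F

section G
variable {α β : Type*} [MeasurableSpace α] [MeasurableSpace β]

/-- product-restrict identity valid for arbitrary first measure -/
lemma prod_restrict' (μ : Measure α) (ν : Measure β) [SFinite ν] {s : Set α} {t : Set β}
    (hs : MeasurableSet s) (ht : MeasurableSet t) :
    (μ.restrict s).prod (ν.restrict t) = (μ.prod ν).restrict (s ×ˢ t) := by
  ext E hE
  rw [Measure.restrict_apply hE, Measure.prod_apply hE,
    Measure.prod_apply (hE.inter (hs.prod ht))]
  rw [← lintegral_indicator hs]
  congr 1
  funext x
  classical
  have : Prod.mk x ⁻¹' (E ∩ s ×ˢ t) = (Prod.mk x ⁻¹' E) ∩ (if x ∈ s then t else ∅) := by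
    ext y
    by_cases hxs : x ∈ s <;> simp [Set.mem_prod, hxs]
  rw [this]
  by_cases hxs : x ∈ s
  · simp only [hxs, if_true, Set.indicator_of_mem]
    rw [Measure.restrict_apply (measurable_prodMk_left hE)]
  · simp [hxs]
end G


section H
variable {X : Type*} [MetricSpace X] {ψ : X → ℝ}

lemma lift_locallyLipschitz (hψ : LocallyLipschitz ψ) :
    LocallyLipschitz (fun p : X × ℝ => ψ p.1) :=
  hψ.comp (LipschitzWith.prod_fst).locallyLipschitz

lemma locLip_lift_le (hψ : LocallyLipschitz ψ) (x : X) (t : ℝ) :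
    locLip (fun p : X × ℝ => ψ p.1) (x, t) ≤ locLip ψ x := by
  have hQnn : ∀ z : X × ℝ, 0 ≤ |ψ x - ψ z.1| / dist ((x, t) : X × ℝ) z :=
    fun z => div_nonneg (abs_nonneg _) dist_nonneg
  have hcob : IsCoboundedUnder (· ≤ ·) (𝓝[≠] ((x, t) : X × ℝ))
      (fun z => |ψ x - ψ z.1| / dist (x, t) z) :=
    IsBoundedUnder.isCoboundedUnder_le
      ⟨0, eventually_map.2 (Filter.Eventually.of_forall hQnn)⟩
  rcases eq_or_neBot (𝓝[≠] x) with hbot | hne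
  · -- isolated point: the function is eventually constant in the fiber direction
    have h0 : locLip ψ x = 0 := by rw [locLip_def, hbot, real_limsup_bot]
    rw [h0]
    have hU : ∃ U ∈ 𝓝 x, ∀ y ∈ U, y = x := by
      have h2 : (∅ : Set X) ∈ 𝓝[≠] x := by rw [hbot]; exact Filter.mem_bot
      rw [mem_nhdsWithin] at h2
      obtain ⟨U, hUo, hxU, hsub⟩ := h2
      refine ⟨U, hUo.mem_nhds hxU, fun y hy => ?_⟩
      by_contra hyx
      exact hsub ⟨hy, hyx⟩
    obtain ⟨U, hU, hall⟩ := hU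
    have hev : ∀ᶠ z in 𝓝[≠] ((x, t) : X × ℝ), |ψ x - ψ z.1| / dist (x, t) z ≤ 0 := by
      have hmem : (U ×ˢ Set.univ : Set (X × ℝ)) ∈ 𝓝 ((x, t) : X × ℝ) :=
        prod_mem_nhds hU Filter.univ_mem
      filter_upwards [eventually_nhdsWithin_of_eventually_nhds
        (Filter.eventually_iff_exists_mem.2 ⟨_, hmem, fun z hz => hall z.1 hz.1⟩)] with z hz
      rw [hz, sub_self, abs_zero, zero_div]
    rw [locLip_def]
    exact limsup_le_of_le hcob hev
  · rw [locLip_def]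
    refine le_of_forall_pos_le_add fun ε hε => ?_
    refine limsup_le_of_le hcob ?_
    have hev : ∀ᶠ y in 𝓝[≠] x, |ψ x - ψ y| / dist x y < locLip ψ x + ε := by
      refine eventually_lt_of_limsup_lt ?_ (isBounded_quot hψ x)
      rw [← locLip_def]
      linarith [locLip_nonneg hψ x]
    rw [eventually_nhdsWithin_iff] at hev
    have hev2 : ∀ᶠ z in 𝓝 ((x, t) : X × ℝ), z.1 ∈ {y : X | y ∈ ({x}ᶜ : Set X) →
        |ψ x - ψ y| / dist x y < locLip ψ x + ε} :=
      (continuous_fst.continuousAt (x := ((x, t) : X × ℝ))).eventually_mem hev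
    refine eventually_nhdsWithin_of_eventually_nhds ?_
    filter_upwards [hev2] with z hz
    rcases eq_or_ne z.1 x with h1 | h1
    · rw [h1, sub_self, abs_zero, zero_div]
      have := locLip_nonneg hψ x
      positivity
    · have hq := hz h1
      have hd1 : 0 < dist x z.1 := dist_pos.2 (Ne.symm h1)
      have hd2 : dist x z.1 ≤ dist ((x, t) : X × ℝ) z := by
        rw [Prod.dist_eq]
        exact le_sup_left
      calc |ψ x - ψ z.1| / dist ((x, t) : X × ℝ) z
          ≤ |ψ x - ψ z.1| / dist x z.1 :=
            div_le_div_of_nonneg_left (abs_nonneg _) hd1 hd2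
        _ ≤ locLip ψ x + ε := le_of_lt hq
end H


section I
variable {X : Type*} [MetricSpace X] [MeasurableSpace X] [BorelSpace X]
  {m : Measure X} {F A : Set X} {φ : X × ℝ → ℝ} {a b : ℝ}

lemma liminf_cmul {c : ℝ≥0∞} (hc0 : c ≠ 0) (hct : c ≠ ⊤) (u : ℕ → ℝ≥0∞) :
    Filter.liminf (fun i => c * u i) atTop = c * Filter.liminf u atTop := by
  rw [Filter.liminf_eq_iSup_iInf_of_nat, Filter.liminf_eq_iSup_iInf_of_nat, ENNReal.mul_iSup]
  congr 1
  funext n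
  rw [ENNReal.mul_iInf_of_ne hc0 hct]
  congr 1
  funext i
  rw [ENNReal.mul_iInf_of_ne hc0 hct]

lemma perimeter_mono (m : Measure X) (F : Set X) {A A' : Set X} (h : A ⊆ A') :
    perimeter m F A ≤ perimeter m F A' := by
  refine sInf_le_sInf_of_isCoinitialFor ?_
  rintro P ⟨φ, h1, h2, rfl⟩
  exact ⟨Filter.liminf (fun i => ∫⁻ x in A, ENNReal.ofReal (locLip (φ i) x) ∂m) atTop,
    ⟨φ, h1, fun K hK hKc => h2 K (hK.trans h) hKc, rfl⟩,
    liminf_le_liminf (Filter.Eventually.of_forall fun i => lintegral_mono_set h)⟩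

lemma indicator_prod_univ (F : Set X) (p : X × ℝ) :
    Set.indicator (F ×ˢ (Set.univ : Set ℝ)) (fun _ => (1:ℝ)) p
      = Set.indicator F (fun _ => (1:ℝ)) p.1 := by
  by_cases h : p.1 ∈ F <;> simp [Set.indicator_apply, h]

lemma lift_lintegral (m : Measure X) {g : X → ℝ≥0∞} (hg : Measurable g)
    (hA : MeasurableSet A) (a b : ℝ) :
    ∫⁻ p in A ×ˢ Set.Icc a b, g p.1 ∂(m.prod volume)
      = (∫⁻ x in A, g x ∂m) * ENNReal.ofReal (b - a) := by
  rw [← prod_restrict' m volume hA measurableSet_Icc,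
    MeasureTheory.lintegral_prod (fun p => g p.1) ((hg.comp measurable_fst).aemeasurable : AEMeasurable (fun p : X × ℝ => g p.1) _)]
  simp only [setLIntegral_const, Real.volume_Icc]
  rw [lintegral_mul_const _ hg]

/-- key step for the hard direction, integrated -/
lemma hard_step (hφ : LocallyLipschitz φ) (hab : a < b) (hA : MeasurableSet A) :
    ENNReal.ofReal (b - a) * ∫⁻ x in A, ENNReal.ofReal (locLip (sliceAvg φ a b) x) ∂m
      ≤ ∫⁻ p in A ×ˢ Set.Icc a b, ENNReal.ofReal (locLip φ p) ∂(m.prod volume) := by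
  have hmeas : Measurable fun p : X × ℝ => ENNReal.ofReal (locLip φ p) :=
    measurable_ofReal_locLip hφ
  rw [← prod_restrict' m volume hA measurableSet_Icc,
    MeasureTheory.lintegral_prod _ hmeas.aemeasurable,
    ← lintegral_const_mul' _ _ (ENNReal.ofReal_ne_top (r := b - a))]
  exact lintegral_mono fun x => core_pointwise hφ hab x

/-- key step for the convergence transfer, integrated -/
lemma conv_step (hφ : LocallyLipschitz φ) (hab : a < b) (hF : MeasurableSet F)
    {K : Set X} (hK : MeasurableSet K) :
    ENNReal.ofReal (b - a) * ∫⁻ x in K,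
        ENNReal.ofReal |sliceAvg φ a b x - Set.indicator F (fun _ => (1:ℝ)) x| ∂m
      ≤ ∫⁻ p in K ×ˢ Set.Icc a b,
          ENNReal.ofReal |φ p - Set.indicator (F ×ˢ (Set.univ : Set ℝ)) (fun _ => (1:ℝ)) p|
          ∂(m.prod volume) := by
  have hmeas : Measurable fun p : X × ℝ =>
      ENNReal.ofReal |φ p - Set.indicator F (fun _ => (1:ℝ)) p.1| := by
    refine ENNReal.measurable_ofReal.comp ?_
    exact (hφ.continuous.measurable.sub
      ((measurable_const.indicator hF).comp measurable_fst)).abs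
  have heq : ∫⁻ p in K ×ˢ Set.Icc a b,
      ENNReal.ofReal |φ p - Set.indicator (F ×ˢ (Set.univ : Set ℝ)) (fun _ => (1:ℝ)) p|
      ∂(m.prod volume)
      = ∫⁻ p in K ×ˢ Set.Icc a b,
      ENNReal.ofReal |φ p - Set.indicator F (fun _ => (1:ℝ)) p.1| ∂(m.prod volume) := by
    congr 1
    funext p
    rw [indicator_prod_univ]
  rw [heq, ← prod_restrict' m volume hK measurableSet_Icc,
    MeasureTheory.lintegral_prod _ hmeas.aemeasurable,
    ← lintegral_const_mul' _ _ (ENNReal.ofReal_ne_top (r := b - a))]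
  exact lintegral_mono fun x => sliceAvg_indicator_bound hφ hab F x

end I


lemma perimeter_def {X : Type*} [MetricSpace X] [MeasurableSpace X]
    (m : Measure X) (F A : Set X) : perimeter m F A
  = sInf { P : ℝ≥0∞ | ∃ φ : ℕ → X → ℝ,
    (∀ i, LocallyLipschitz (φ i)) ∧
    (∀ K : Set X, K ⊆ A → IsCompact K →
      Tendsto (fun i => ∫⁻ x in K,
          ENNReal.ofReal |φ i x - Set.indicator F (fun _ => (1 : ℝ)) x| ∂m)
        atTop (𝓝 0)) ∧
    P = Filter.liminf (fun i => ∫⁻ x in A, ENNReal.ofReal (locLip (φ i) x) ∂m) atTop } := rfl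

section J
variable {X : Type*} [MetricSpace X] [MeasurableSpace X] [BorelSpace X]

/-- The key equality. -/
lemma key_eq (m : Measure X) {A : Set X} (hA : MeasurableSet A) {F : Set X}
    (hF : MeasurableSet F) {a b : ℝ} (hab : a < b) :
    ENNReal.ofReal (b - a) * perimeter m F A
      = perimeter (m.prod (volume : Measure ℝ)) (F ×ˢ (Set.univ : Set ℝ))
          (A ×ˢ Set.Icc a b) := by
  have hba : (0:ℝ) < b - a := by linarith
  set c₀ := ENNReal.ofReal (b - a) with hc₀
  have hc₀0 : c₀ ≠ 0 := (ENNReal.ofReal_pos.2 hba).ne'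
  have hc₀top : c₀ ≠ ⊤ := ENNReal.ofReal_ne_top
  refine le_antisymm ?_ ?_
  · -- hard direction: c₀ * Per(F;A) ≤ Per(E; A × Icc)
    rw [perimeter_def (m.prod volume)]
    refine le_sInf ?_
    rintro P ⟨φ, hlip, hconv, rfl⟩
    set ψ : ℕ → X → ℝ := fun i => sliceAvg (φ i) a b with hψ
    have hψmem : perimeter m F A
        ≤ Filter.liminf (fun i => ∫⁻ x in A, ENNReal.ofReal (locLip (ψ i) x) ∂m) atTop := by
      rw [perimeter_def]
      refine sInf_le ⟨ψ, fun i => sliceAvg_locallyLipschitz (hlip i) hab, ?_, rfl⟩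
      intro K hKA hKc
      have hconv' := hconv (K ×ˢ Set.Icc a b)
        (Set.prod_mono hKA (le_refl _)) (hKc.prod isCompact_Icc)
      have hle : ∀ i, (∫⁻ x in K,
          ENNReal.ofReal |ψ i x - Set.indicator F (fun _ => (1:ℝ)) x| ∂m)
          ≤ c₀⁻¹ * ∫⁻ p in K ×ˢ Set.Icc a b,
            ENNReal.ofReal |φ i p - Set.indicator (F ×ˢ (Set.univ : Set ℝ))
              (fun _ => (1:ℝ)) p| ∂(m.prod volume) := by
        intro i
        have h := mul_le_mul_right (conv_step (m := m) (hlip i) hab hF hKc.measurableSet) c₀⁻¹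
        rwa [← mul_assoc, ENNReal.inv_mul_cancel hc₀0 hc₀top, one_mul] at h
      have hd : Tendsto (fun i => c₀⁻¹ * ∫⁻ p in K ×ˢ Set.Icc a b,
          ENNReal.ofReal |φ i p - Set.indicator (F ×ˢ (Set.univ : Set ℝ))
            (fun _ => (1:ℝ)) p| ∂(m.prod volume)) atTop (𝓝 0) := by
        have := ENNReal.Tendsto.const_mul (a := c₀⁻¹) hconv'
          (Or.inr (ENNReal.inv_ne_top.2 hc₀0))
        rwa [mul_zero] at this
      exact tendsto_of_tendsto_of_tendsto_of_le_of_le' tendsto_const_nhds hd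
        (Filter.Eventually.of_forall fun i => zero_le)
        (Filter.Eventually.of_forall hle)
    calc c₀ * perimeter m F A
        ≤ c₀ * Filter.liminf
            (fun i => ∫⁻ x in A, ENNReal.ofReal (locLip (ψ i) x) ∂m) atTop :=
          mul_le_mul_right hψmem _
      _ = Filter.liminf (fun i => c₀ * ∫⁻ x in A,
            ENNReal.ofReal (locLip (ψ i) x) ∂m) atTop := (liminf_cmul hc₀0 hc₀top _).symm
      _ ≤ Filter.liminf (fun i => ∫⁻ p in A ×ˢ Set.Icc a b,
            ENNReal.ofReal (locLip (φ i) p) ∂(m.prod volume)) atTop :=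
          liminf_le_liminf (Filter.Eventually.of_forall fun i =>
            hard_step (m := m) (hlip i) hab hA)
  · -- easy direction: Per(E; A × Icc) ≤ c₀ * Per(F;A)
    have hstep : ∀ P ∈ { P : ℝ≥0∞ | ∃ φ : ℕ → X → ℝ,
        (∀ i, LocallyLipschitz (φ i)) ∧
        (∀ K : Set X, K ⊆ A → IsCompact K →
          Tendsto (fun i => ∫⁻ x in K,
              ENNReal.ofReal |φ i x - Set.indicator F (fun _ => (1 : ℝ)) x| ∂m)
            atTop (𝓝 0)) ∧
        P = Filter.liminf (fun i => ∫⁻ x in A,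
            ENNReal.ofReal (locLip (φ i) x) ∂m) atTop },
        perimeter (m.prod (volume : Measure ℝ)) (F ×ˢ (Set.univ : Set ℝ))
          (A ×ˢ Set.Icc a b) ≤ c₀ * P := by
      rintro P ⟨ψ, hlip, hconv, rfl⟩
      have hmem : perimeter (m.prod (volume : Measure ℝ)) (F ×ˢ (Set.univ : Set ℝ))
          (A ×ˢ Set.Icc a b) ≤ Filter.liminf (fun i => ∫⁻ p in A ×ˢ Set.Icc a b,
            ENNReal.ofReal (locLip (fun q : X × ℝ => ψ i q.1) p) ∂(m.prod volume)) atTop := by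
        rw [perimeter_def]
        refine sInf_le ⟨fun i (p : X × ℝ) => ψ i p.1,
          fun i => lift_locallyLipschitz (hlip i), ?_, rfl⟩
        intro K' hK' hK'c
        set K := Prod.fst '' K' with hK
        have hKc : IsCompact K := hK'c.image continuous_fst
        have hKA : K ⊆ A := by
          rintro _ ⟨p, hp, rfl⟩
          exact (hK' hp).1
        have hsub : K' ⊆ K ×ˢ Set.Icc a b :=
          fun p hp => ⟨Set.mem_image_of_mem _ hp, (hK' hp).2⟩
        have hle : ∀ i, (∫⁻ p in K', ENNReal.ofReal
            |ψ i p.1 - Set.indicator (F ×ˢ (Set.univ : Set ℝ)) (fun _ => (1:ℝ)) p|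
            ∂(m.prod volume))
            ≤ (∫⁻ x in K, ENNReal.ofReal
                |ψ i x - Set.indicator F (fun _ => (1:ℝ)) x| ∂m) * c₀ := by
          intro i
          have hg : Measurable fun x : X => ENNReal.ofReal
              |ψ i x - Set.indicator F (fun _ => (1:ℝ)) x| :=
            ENNReal.measurable_ofReal.comp
              (((hlip i).continuous.measurable.sub (measurable_const.indicator hF)).abs)
          calc (∫⁻ p in K', ENNReal.ofReal
              |ψ i p.1 - Set.indicator (F ×ˢ (Set.univ : Set ℝ)) (fun _ => (1:ℝ)) p|
              ∂(m.prod volume))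
              ≤ ∫⁻ p in K ×ˢ Set.Icc a b, ENNReal.ofReal
                |ψ i p.1 - Set.indicator (F ×ˢ (Set.univ : Set ℝ)) (fun _ => (1:ℝ)) p|
                ∂(m.prod volume) := lintegral_mono_set hsub
            _ = ∫⁻ p in K ×ˢ Set.Icc a b, ENNReal.ofReal
                |ψ i p.1 - Set.indicator F (fun _ => (1:ℝ)) p.1| ∂(m.prod volume) := by
                congr 1
                funext p
                rw [indicator_prod_univ]
            _ = (∫⁻ x in K, ENNReal.ofReal
                |ψ i x - Set.indicator F (fun _ => (1:ℝ)) x| ∂m) * c₀ :=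
                lift_lintegral m hg hKc.measurableSet a b
        have hd : Tendsto (fun i => (∫⁻ x in K, ENNReal.ofReal
            |ψ i x - Set.indicator F (fun _ => (1:ℝ)) x| ∂m) * c₀) atTop (𝓝 0) := by
          have := ENNReal.Tendsto.mul_const (b := c₀) (hconv K hKA hKc) (Or.inr hc₀top)
          rwa [zero_mul] at this
        exact tendsto_of_tendsto_of_tendsto_of_le_of_le' tendsto_const_nhds hd
          (Filter.Eventually.of_forall fun i => zero_le)
          (Filter.Eventually.of_forall hle)
      refine le_trans hmem ?_
      have hstep2 : ∀ i, (∫⁻ p in A ×ˢ Set.Icc a b,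
          ENNReal.ofReal (locLip (fun q : X × ℝ => ψ i q.1) p) ∂(m.prod volume))
          ≤ c₀ * ∫⁻ x in A, ENNReal.ofReal (locLip (ψ i) x) ∂m := by
        intro i
        calc (∫⁻ p in A ×ˢ Set.Icc a b,
            ENNReal.ofReal (locLip (fun q : X × ℝ => ψ i q.1) p) ∂(m.prod volume))
            ≤ ∫⁻ p in A ×ˢ Set.Icc a b,
              ENNReal.ofReal (locLip (ψ i) p.1) ∂(m.prod volume) :=
              lintegral_mono fun p =>
                ENNReal.ofReal_le_ofReal (locLip_lift_le (hlip i) p.1 p.2)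
          _ = (∫⁻ x in A, ENNReal.ofReal (locLip (ψ i) x) ∂m) * c₀ :=
              lift_lintegral m (measurable_ofReal_locLip (hlip i)) hA a b
          _ = c₀ * ∫⁻ x in A, ENNReal.ofReal (locLip (ψ i) x) ∂m := mul_comm _ _
      calc Filter.liminf (fun i => ∫⁻ p in A ×ˢ Set.Icc a b,
            ENNReal.ofReal (locLip (fun q : X × ℝ => ψ i q.1) p) ∂(m.prod volume)) atTop
          ≤ Filter.liminf (fun i => c₀ * ∫⁻ x in A,
              ENNReal.ofReal (locLip (ψ i) x) ∂m) atTop :=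
            liminf_le_liminf (Filter.Eventually.of_forall hstep2)
        _ = c₀ * Filter.liminf (fun i => ∫⁻ x in A,
              ENNReal.ofReal (locLip (ψ i) x) ∂m) atTop := liminf_cmul hc₀0 hc₀top _
    rw [perimeter_def m]
    rw [sInf_eq_iInf']
    rw [ENNReal.mul_iInf_of_ne hc₀0 hc₀top]
    exact le_iInf fun P => hstep P P.2
end J


theorem stmt_7 {X : Type*} [MetricSpace X] [MeasurableSpace X] [BorelSpace X]
    (m : Measure X) (A : Set X) (hA : IsOpen A) (F : Set X) (hF : MeasurableSet F)
    (R : ℝ) (hR : 0 < R) :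
    ENNReal.ofReal R * perimeter m F A ≤
        perimeter (m.prod (volume : Measure ℝ)) (F ×ˢ (Set.univ : Set ℝ))
          (A ×ˢ Set.Icc (0 : ℝ) R) ∧
      ENNReal.ofReal R * perimeter m F A =
        perimeter (m.prod (volume : Measure ℝ)) (F ×ˢ (Set.univ : Set ℝ))
          (A ×ˢ Set.Icc (0 : ℝ) R) ∧
      ((∀ (p : X × ℝ) (ρ : ℝ), 0 < ρ →
          perimeter (m.prod (volume : Measure ℝ)) (F ×ˢ (Set.univ : Set ℝ))
            (Metric.ball p ρ) < ⊤) ↔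
        (∀ (x : X) (ρ : ℝ), 0 < ρ → perimeter m F (Metric.ball x ρ) < ⊤)) := by
  have hkey : ENNReal.ofReal R * perimeter m F A =
      perimeter (m.prod (volume : Measure ℝ)) (F ×ˢ (Set.univ : Set ℝ))
        (A ×ˢ Set.Icc (0 : ℝ) R) := by
    have := key_eq m hA.measurableSet hF (a := 0) (b := R) hR
    rwa [sub_zero] at this
  refine ⟨le_of_eq hkey, hkey, ?_⟩
  constructor
  · -- product finite on balls → base finite on balls
    intro hprod x ρ hρ
    have hk : ENNReal.ofReal ρ * perimeter m F (Metric.ball x ρ)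
        = perimeter (m.prod (volume : Measure ℝ)) (F ×ˢ (Set.univ : Set ℝ))
          (Metric.ball x ρ ×ˢ Set.Icc (0:ℝ) ρ) := by
      have := key_eq m (Metric.isOpen_ball (x := x) (ε := ρ)).measurableSet hF
        (a := 0) (b := ρ) hρ
      rwa [sub_zero] at this
    have hsub : Metric.ball x ρ ×ˢ Set.Icc (0:ℝ) ρ ⊆ Metric.ball ((x, ρ/2) : X × ℝ) ρ := by
      rw [← ball_prod_same]
      refine Set.prod_mono (le_refl _) ?_
      intro t ht
      rw [Real.ball_eq_Ioo]
      constructor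
      · calc ρ/2 - ρ < 0 := by linarith
          _ ≤ t := ht.1
      · calc t ≤ ρ := ht.2
          _ < ρ/2 + ρ := by linarith
    have hlt : perimeter (m.prod (volume : Measure ℝ)) (F ×ˢ (Set.univ : Set ℝ))
        (Metric.ball x ρ ×ˢ Set.Icc (0:ℝ) ρ) < ⊤ :=
      lt_of_le_of_lt (perimeter_mono _ _ hsub) (hprod (x, ρ/2) ρ hρ)
    rw [← hk] at hlt
    by_contra htop
    rw [not_lt, top_le_iff] at htop
    rw [htop, ENNReal.mul_top (by simpa using (ENNReal.ofReal_pos.2 hρ).ne')] at hlt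
    exact (lt_irrefl _ hlt)
  · -- base finite on balls → product finite on balls
    intro hbase p ρ hρ
    have hsub : Metric.ball p ρ ⊆ Metric.ball p.1 ρ ×ˢ Set.Icc (p.2 - ρ) (p.2 + ρ) := by
      rw [← Prod.mk.eta (p := p), ← ball_prod_same]
      refine Set.prod_mono (le_refl _) ?_
      rw [Real.ball_eq_Ioo]
      exact Set.Ioo_subset_Icc_self
    have hk : ENNReal.ofReal (p.2 + ρ - (p.2 - ρ)) * perimeter m F (Metric.ball p.1 ρ)
        = perimeter (m.prod (volume : Measure ℝ)) (F ×ˢ (Set.univ : Set ℝ))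
          (Metric.ball p.1 ρ ×ˢ Set.Icc (p.2 - ρ) (p.2 + ρ)) :=
      key_eq m Metric.isOpen_ball.measurableSet hF (by linarith)
    refine lt_of_le_of_lt (perimeter_mono _ _ hsub) ?_
    rw [← hk]
    exact ENNReal.mul_lt_top ENNReal.ofReal_lt_top (hbase p.1 ρ hρ)
end
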